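/- arXiv:2010.09972 — 2 statements merged into one kernel-verified Lean document; each statement's English description precedes it below -/
import Mathlib

section
/- Let s > 7/2 and suppose (ξ_k)_{k≥1} satisfies Σ_{k≥1} ‖ξ_k‖_{H^σ} < ∞ for every σ ≥ 0. Define, for X = (u,η) ∈ H^s(𝕋) × H^{s-1}(𝕋), g(X) = (−u ∂_x u + ½ (1−∂²_x)^{-1} Σ_{k=1}^∞ 𝓛²_{ξ_k} (1−∂²_x) u, −u ∂_x η + ½ Σ_{k=1}^∞ 𝓛²_{ξ_k} η) and h^k(X) = (−(1−∂²_x)^{-1} 𝓛_{ξ_k} (1−∂²_x) u, −𝓛_{ξ_k} η). Then there is a constant C > 0 (depending on s and (ξ_k)) such that ‖g(X)‖_{H^{s-2}×H^{s-3}} ≤ C (1 + ‖(u,η)‖²_{H^s×H^{s-1}}) and (Σ_{k=1}^∞ ‖h^k(X)‖²_{H^{s-1}×H^{s-2}})^{1/2} ≤ C ‖(u,η)‖_{H^s×H^{s-1}}. -/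
noncomputable section
open scoped BigOperators

/-- A (complex-valued) function on the torus `𝕋 = ℝ/2πℤ`, represented by its sequence of
Fourier coefficients `f̂ : ℤ → ℂ`. -/
abbrev FC := ℤ → ℂ

namespace FC

/-- The Sobolev weight `(1+k²)^s`. -/
def wt (s : ℝ) (k : ℤ) : ℝ := (1 + (k : ℝ) ^ 2) ^ s

/-- `c` represents a function belonging to the Sobolev space `H^s(𝕋)`. -/
def memHs (s : ℝ) (c : FC) : Prop := Summable fun k : ℤ => wt s k * ‖c k‖ ^ 2

/-- The `H^s(𝕋)` norm: `‖f‖²_{H^s} = Σ_{k∈ℤ} (1+k²)^s |f̂(k)|²`. -/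
def hsNorm (s : ℝ) (c : FC) : ℝ := Real.sqrt (∑' k : ℤ, wt s k * ‖c k‖ ^ 2)

/-- The `H^s(𝕋)` inner product `(f,g)_{H^s} = Σ_{k∈ℤ} (1+k²)^s f̂(k) conj(ĝ(k))`
(its real part; the sum is real for real-valued functions). -/
def hsInner (s : ℝ) (c d : FC) : ℝ :=
  (∑' k : ℤ, ((wt s k : ℂ) * (c k * (starRingEnd ℂ) (d k)))).re

/-- `c` represents a real-valued function (conjugate-symmetric coefficients). -/
def isReal (c : FC) : Prop := ∀ k : ℤ, c (-k) = (starRingEnd ℂ) (c k)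

/-- The derivative `∂ₓ`, i.e. the Fourier multiplier `ik`. -/
def D1 (c : FC) : FC := fun k => Complex.I * (k : ℂ) * c k

/-- The pointwise product of functions, i.e. convolution of Fourier coefficients. -/
def mul (c d : FC) : FC := fun k => ∑' j : ℤ, c j * d (k - j)

/-- The represented function, evaluated at `x ∈ ℝ`. -/
def eval (c : FC) (x : ℝ) : ℂ := ∑' k : ℤ, c k * Complex.exp (Complex.I * (k : ℂ) * (x : ℂ))

/-- The `L^∞` norm (supremum of the represented periodic function over ℝ). -/
def linfty (c : FC) : ℝ := ⨆ x : ℝ, ‖eval c x‖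

/-- The `W^{1,∞}` norm. -/
def w1infty (c : FC) : ℝ := linfty c + linfty (D1 c)

/-- A Fourier multiplier operator with real symbol `m`. -/
def mult (m : ℤ → ℝ) (c : FC) : FC := fun k => (m k : ℂ) * c k

/-- The operator `(1-∂ₓ²)⁻¹`, i.e. the Fourier multiplier `(1+k²)⁻¹`. -/
def helmInv : FC → FC := mult fun k => (1 + (k : ℝ) ^ 2)⁻¹

/-- The operator `1-∂ₓ²`, i.e. the Fourier multiplier `1+k²`. -/
def helm : FC → FC := mult fun k => 1 + (k : ℝ) ^ 2

/-- The operator `T̃_ε = (1-ε²∂ₓ²)⁻¹`, i.e. the Fourier multiplier `(1+ε²k²)⁻¹`. -/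
def T (ε : ℝ) : FC → FC := mult fun k => (1 + ε ^ 2 * (k : ℝ) ^ 2)⁻¹

/-- The periodic Hilbert transform, i.e. the Fourier multiplier `-i·sgn(k)`. -/
def hilbert (c : FC) : FC := fun k => -Complex.I * (Int.sign k : ℂ) * c k

/-- The Friedrichs-type mollifier `J_ε`, the Fourier multiplier `ĵ(εk)`. -/
def Jmol (jhat : ℝ → ℝ) (ε : ℝ) : FC → FC := mult fun k => jhat (ε * (k : ℝ))

/-- The generalized Lie derivative `𝓛_ξ f = ξ ∂ₓ f + (∂ₓ ξ) f`. -/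
def lie (ξ c : FC) : FC := mul ξ (D1 c) + mul (D1 ξ) c

/-- `𝓛²_ξ f = 𝓛_ξ (𝓛_ξ f)`. -/
def lie2 (ξ c : FC) : FC := lie ξ (lie ξ c)

/-- The coefficientwise sum `Σ_{k∈ℕ} F k` of a sequence of functions. -/
def tsumFC (F : ℕ → FC) : FC := fun m => ∑' k : ℕ, F k m

/-- The norm on the product space `H^{s₁}×H^{s₂}`. -/
def pairNorm (s₁ s₂ : ℝ) (c d : FC) : ℝ := Real.sqrt (hsNorm s₁ c ^ 2 + hsNorm s₂ d ^ 2)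

/-- The inner product on the product space `H^{s₁}×H^{s₂}`:
`((c₁,d₁),(c₂,d₂)) ↦ (c₁,c₂)_{H^{s₁}} + (d₁,d₂)_{H^{s₂}}`. -/
def pairInner (s₁ s₂ : ℝ) (c₁ d₁ c₂ d₂ : FC) : ℝ := hsInner s₁ c₁ c₂ + hsInner s₂ d₁ d₂

end FC

/-- First component of the singular drift of the stochastic two-component CH system:
`−u ∂ₓ u + ½ (1−∂ₓ²)⁻¹ Σ_k 𝓛²_{ξ_k} (1−∂ₓ²) u`. -/
def gCH1 (ξ : ℕ → FC) (u : FC) : FC :=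
  -(FC.mul u (FC.D1 u)) +
    (1 / 2 : ℝ) • FC.helmInv (FC.tsumFC fun k => FC.lie2 (ξ k) (FC.helm u))

/-- Second component of the singular drift of the stochastic two-component CH system:
`−u ∂ₓ η + ½ Σ_k 𝓛²_{ξ_k} η`. -/
def gCH2 (ξ : ℕ → FC) (u η : FC) : FC :=
  -(FC.mul u (FC.D1 η)) + (1 / 2 : ℝ) • FC.tsumFC fun k => FC.lie2 (ξ k) η

/-- First component of the diffusion coefficient `h^k`:
`−(1−∂ₓ²)⁻¹ 𝓛_{ξ_k} (1−∂ₓ²) u`. -/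
def hCH1 (ξ : ℕ → FC) (k : ℕ) (u : FC) : FC :=
  -(FC.helmInv (FC.lie (ξ k) (FC.helm u)))

/-- Second component of the diffusion coefficient `h^k`: `−𝓛_{ξ_k} η`. -/
def hCH2 (ξ : ℕ → FC) (k : ℕ) (η : FC) : FC := -(FC.lie (ξ k) η)

/-!
All estimates are made on Fourier coefficients: `k ↦ (1 + k²)^(t/2) ‖ĉ(k)‖` is an `ℓ²` sequence
of norm `‖c‖_{H^t}`. Peetre's inequality `(1 + k²)^r ≤ 2^|r| (1 + j²)^|r| (1 + (k - j)²)^r` turns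
the coefficients of a product `f g` into the convolution of an `ℓ¹` sequence, controlled by
`‖f‖_{H^(|t|+2)}` through Cauchy–Schwarz, with an `ℓ²` sequence of norm `‖g‖_{H^t}`; Young's
inequality then gives `‖f g‖_{H^t} ≲ ‖f‖_{H^(|t|+2)} ‖g‖_{H^t}`. Hence `𝓛_ξ` maps `H^(t+1)` to
`H^t` with norm `≲ ‖ξ‖_{H^(|t|+3)}`, and Minkowski's inequality sums the series over `k`, because
`Σ_k ‖ξ_k‖` converges. So `g` loses two derivatives and is at most quadratic, while `h` loses one
derivative and is linear, with square-summable coefficients.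
-/

theorem tsum_mul_le_sqrt_mul_sqrt {ι : Type*} {f g : ι → ℝ} (hf0 : ∀ i, 0 ≤ f i)
    (hg0 : ∀ i, 0 ≤ g i) (hf : Summable fun i => f i ^ 2) (hg : Summable fun i => g i ^ 2) :
    Summable (fun i => f i * g i) ∧
      ∑' i, f i * g i ≤ √(∑' i, f i ^ 2) * √(∑' i, g i ^ 2) := by
  have hsum : ∀ u : Finset ι, ∑ i ∈ u, f i * g i ≤ √(∑' i, f i ^ 2) * √(∑' i, g i ^ 2) :=
    fun u => (Real.sum_mul_le_sqrt_mul_sqrt u f g).trans <| by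
      gcongr
      · exact hf.sum_le_tsum u fun i _ => sq_nonneg _
      · exact hg.sum_le_tsum u fun i _ => sq_nonneg _
  have h0 : 0 ≤ fun i => f i * g i := fun i => mul_nonneg (hf0 i) (hg0 i)
  exact ⟨summable_of_sum_le h0 hsum, Real.tsum_le_of_sum_le h0 hsum⟩

theorem sqrt_tsum_sq_tsum_le {ι κ : Type*} {G : ι → κ → ℝ} (hG0 : ∀ i m, 0 ≤ G i m)
    (hG : ∀ i, Summable fun m => G i m ^ 2) (hs : Summable fun i => √(∑' m, G i m ^ 2)) :
    Summable (fun m => (∑' i, G i m) ^ 2) ∧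
      √(∑' m, (∑' i, G i m) ^ 2) ≤ ∑' i, √(∑' m, G i m ^ 2) := by
  set S := ∑' i, √(∑' m, G i m ^ 2)
  have hS0 : 0 ≤ S := tsum_nonneg fun i => Real.sqrt_nonneg _
  have hGle : ∀ i m, G i m ≤ √(∑' m, G i m ^ 2) := fun i m =>
    Real.le_sqrt_of_sq_le ((hG i).le_tsum m fun _ _ => sq_nonneg _)
  have hT : ∀ m, Summable fun i => G i m := fun m =>
    hs.of_nonneg_of_le (fun i => hG0 i m) (fun i => hGle i m)
  have hT0 : ∀ m, 0 ≤ ∑' i, G i m := fun m => tsum_nonneg fun i => hG0 i m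
  -- duality: pairing `Q` with each `G i` and using Cauchy–Schwarz gives `Q ≤ √Q * S`
  have key : ∀ u : Finset κ, ∑ m ∈ u, (∑' i, G i m) ^ 2 ≤ S ^ 2 := by
    intro u
    set Q := ∑ m ∈ u, (∑' i, G i m) ^ 2
    have hQ0 : 0 ≤ Q := Finset.sum_nonneg fun m _ => sq_nonneg _
    have hterm : ∀ i, ∑ m ∈ u, (∑' i, G i m) * G i m ≤ √Q * √(∑' m, G i m ^ 2) := fun i =>
      (Real.sum_mul_le_sqrt_mul_sqrt u _ _).trans <| by
        gcongr
        exact (hG i).sum_le_tsum u fun m _ => sq_nonneg _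
    have hQ : Q = ∑' i, ∑ m ∈ u, (∑' i, G i m) * G i m := by
      rw [Summable.tsum_finsetSum fun m _ => (hT m).mul_left _]
      simp only [Q, sq, tsum_mul_left]
    have hQS : Q ≤ √Q * S := calc
      Q = ∑' i, ∑ m ∈ u, (∑' i, G i m) * G i m := hQ
      _ ≤ ∑' i, √Q * √(∑' m, G i m ^ 2) := by
        refine Summable.tsum_le_tsum hterm ?_ (hs.mul_left _)
        exact (hs.mul_left _).of_nonneg_of_le
          (fun i => Finset.sum_nonneg fun m _ => mul_nonneg (hT0 m) (hG0 i m)) hterm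
      _ = √Q * S := tsum_mul_left
    nlinarith [Real.sq_sqrt hQ0, Real.sqrt_nonneg Q]
  exact ⟨summable_of_sum_le (fun m => sq_nonneg _) key,
    Real.sqrt_le_iff.mpr ⟨hS0, Real.tsum_le_of_sum_le (fun m => sq_nonneg _) key⟩⟩

theorem sqrt_tsum_sq_le_tsum_of_le {ι : Type*} {x y : ι → ℝ} (hx0 : ∀ i, 0 ≤ x i)
    (hxy : ∀ i, x i ≤ y i) (hy : Summable y) :
    Summable (fun i => x i ^ 2) ∧ √(∑' i, x i ^ 2) ≤ ∑' i, y i := by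
  have hy0 : ∀ i, 0 ≤ y i := fun i => (hx0 i).trans (hxy i)
  have hle : ∀ i, x i ^ 2 ≤ (∑' i, y i) * y i := fun i => by
    rw [sq]
    exact mul_le_mul ((hxy i).trans (hy.le_tsum i fun j _ => hy0 j)) (hxy i) (hx0 i)
      (tsum_nonneg hy0)
  have hsum : Summable fun i => x i ^ 2 :=
    (hy.mul_left _).of_nonneg_of_le (fun i => sq_nonneg _) hle
  refine ⟨hsum, Real.sqrt_le_iff.mpr ⟨tsum_nonneg hy0, ?_⟩⟩
  calc ∑' i, x i ^ 2 ≤ ∑' i, (∑' i, y i) * y i := hsum.tsum_le_tsum hle (hy.mul_left _)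
    _ = (∑' i, y i) ^ 2 := by rw [tsum_mul_left, sq]

/-- Young's inequality, as Minkowski's inequality for the translates of `B`. -/
theorem sqrt_tsum_sq_conv_le {G : Type*} [AddGroup G] {A B : G → ℝ} (hA0 : ∀ j, 0 ≤ A j)
    (hB0 : ∀ m, 0 ≤ B m) (hA : Summable A) (hB : Summable fun m => B m ^ 2) :
    Summable (fun k => (∑' j, A j * B (k - j)) ^ 2) ∧
      √(∑' k, (∑' j, A j * B (k - j)) ^ 2) ≤ (∑' j, A j) * √(∑' m, B m ^ 2) := by
  have hshift : ∀ j, Summable (fun k => B (k - j) ^ 2) ∧ ∑' k, B (k - j) ^ 2 = ∑' m, B m ^ 2 :=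
    fun j => ⟨(Equiv.subRight j).summable_iff.mpr hB, (Equiv.subRight j).tsum_eq fun m => B m ^ 2⟩
  have htr : ∀ j, √(∑' k, (A j * B (k - j)) ^ 2) = A j * √(∑' m, B m ^ 2) := fun j => by
    simp only [mul_pow, tsum_mul_left, (hshift j).2]
    rw [Real.sqrt_mul (sq_nonneg _), Real.sqrt_sq (hA0 j)]
  have hsq : ∀ j, Summable fun k => (A j * B (k - j)) ^ 2 := fun j => by
    simpa only [mul_pow] using (hshift j).1.mul_left (A j ^ 2)
  have hmk := sqrt_tsum_sq_tsum_le (fun j k => mul_nonneg (hA0 j) (hB0 (k - j))) hsq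
    (by simpa only [htr] using hA.mul_right _)
  simpa only [htr, tsum_mul_right] using hmk

namespace FC

lemma one_le_one_add_sq (k : ℤ) : (1 : ℝ) ≤ 1 + (k : ℝ) ^ 2 :=
  le_add_of_nonneg_right (sq_nonneg _)

lemma wt_pos (s : ℝ) (k : ℤ) : 0 < wt s k := Real.rpow_pos_of_pos (by positivity) s

lemma wt_nonneg (s : ℝ) (k : ℤ) : 0 ≤ wt s k := (wt_pos s k).le

lemma wt_mono {s t : ℝ} (h : s ≤ t) (k : ℤ) : wt s k ≤ wt t k :=
  Real.rpow_le_rpow_of_exponent_le (one_le_one_add_sq k) h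

lemma wt_add (s t : ℝ) (k : ℤ) : wt (s + t) k = wt s k * wt t k :=
  Real.rpow_add (by positivity) s t

lemma wt_one (k : ℤ) : wt 1 k = 1 + (k : ℝ) ^ 2 := Real.rpow_one _

lemma one_add_sq_le_two_mul (k j : ℤ) :
    1 + (k : ℝ) ^ 2 ≤ 2 * ((1 + (j : ℝ) ^ 2) * (1 + ((k - j : ℤ) : ℝ) ^ 2)) := by
  push_cast
  nlinarith [sq_nonneg ((j : ℝ) - (k - j)), sq_nonneg ((j : ℝ) * (k - j))]

theorem wt_le_two_rpow_mul (r : ℝ) (k j : ℤ) :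
    wt r k ≤ 2 ^ |r| * (wt |r| j * wt r (k - j)) := by
  rcases le_or_gt 0 r with hr | hr
  · rw [abs_of_nonneg hr]
    calc wt r k ≤ (2 * ((1 + (j : ℝ) ^ 2) * (1 + ((k - j : ℤ) : ℝ) ^ 2))) ^ r :=
          Real.rpow_le_rpow (by positivity) (one_add_sq_le_two_mul k j) hr
      _ = 2 ^ r * (wt r j * wt r (k - j)) := by
          rw [Real.mul_rpow (by norm_num) (by positivity),
            Real.mul_rpow (by positivity) (by positivity)]
          rfl
  · -- for `r < 0`, apply the inequality at `k - j` with the exponent `r` reversing it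
    have h := Real.rpow_le_rpow_of_nonpos (by positivity) (one_add_sq_le_two_mul (k - j) (-j))
      hr.le
    rw [show k - j - -j = k by ring, Real.mul_rpow (by norm_num) (by positivity),
      Real.mul_rpow (by positivity) (by positivity)] at h
    rw [abs_of_neg hr, Real.rpow_neg (by norm_num), wt, wt, wt, Real.rpow_neg (by positivity),
      le_inv_mul_iff₀ (by positivity), le_inv_mul_iff₀ (by positivity)]
    push_cast at h ⊢
    rw [neg_sq] at h
    linarith

def sobSeq (t : ℝ) (c : FC) (k : ℤ) : ℝ := wt (t / 2) k * ‖c k‖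

lemma sobSeq_nonneg (t : ℝ) (c : FC) (k : ℤ) : 0 ≤ sobSeq t c k :=
  mul_nonneg (wt_nonneg _ _) (norm_nonneg _)

lemma sobSeq_sq (t : ℝ) (c : FC) (k : ℤ) : sobSeq t c k ^ 2 = wt t k * ‖c k‖ ^ 2 := by
  rw [sobSeq, mul_pow, sq (wt _ k), ← wt_add, add_halves]

lemma memHs_iff_summable_sobSeq_sq {t : ℝ} {c : FC} :
    memHs t c ↔ Summable fun k => sobSeq t c k ^ 2 := by
  simp only [sobSeq_sq, memHs]

lemma hsNorm_eq_sqrt_tsum_sobSeq_sq (t : ℝ) (c : FC) :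
    hsNorm t c = √(∑' k, sobSeq t c k ^ 2) := by
  simp only [sobSeq_sq, hsNorm]

lemma hsNorm_nonneg (t : ℝ) (c : FC) : 0 ≤ hsNorm t c := Real.sqrt_nonneg _

lemma sobSeq_le_hsNorm {t : ℝ} {c : FC} (hc : memHs t c) (k : ℤ) :
    sobSeq t c k ≤ hsNorm t c := by
  rw [hsNorm_eq_sqrt_tsum_sobSeq_sq]
  exact Real.le_sqrt_of_sq_le
    ((memHs_iff_summable_sobSeq_sq.mp hc).le_tsum k fun _ _ => sq_nonneg _)

/-- Membership travels with every bound because `hsNorm t c` is junk (a divergent `tsum` is `0`)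
when `c ∉ H^t`. -/
def HsLe (t : ℝ) (c : FC) (B : ℝ) : Prop := memHs t c ∧ hsNorm t c ≤ B

section HsLe

variable {t t' B B' : ℝ} {c d : FC}

lemma hsLe_hsNorm (hc : memHs t c) : HsLe t c (hsNorm t c) := ⟨hc, le_rfl⟩

lemma HsLe.trans_le (h : HsLe t c B) (hB : B ≤ B') : HsLe t c B' := ⟨h.1, h.2.trans hB⟩

lemma HsLe.nonneg (h : HsLe t c B) : 0 ≤ B := (hsNorm_nonneg t c).trans h.2

lemma hsLe_of_sobSeq_le_mul {C : ℝ} (hC : 0 ≤ C) {b : ℤ → ℝ} (h : ∀ k, sobSeq t c k ≤ C * b k)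
    (hb : Summable fun k => b k ^ 2) : HsLe t c (C * √(∑' k, b k ^ 2)) := by
  have hle : ∀ k, sobSeq t c k ^ 2 ≤ C ^ 2 * b k ^ 2 := fun k => by
    rw [← mul_pow]
    exact pow_le_pow_left₀ (sobSeq_nonneg t c k) (h k) 2
  have hsum := (hb.mul_left (C ^ 2)).of_nonneg_of_le (fun k => sq_nonneg _) hle
  refine ⟨memHs_iff_summable_sobSeq_sq.mpr hsum, ?_⟩
  rw [hsNorm_eq_sqrt_tsum_sobSeq_sq, ← Real.sqrt_sq hC, ← Real.sqrt_mul (sq_nonneg C),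
    ← tsum_mul_left]
  exact Real.sqrt_le_sqrt (hsum.tsum_le_tsum hle (hb.mul_left _))

lemma HsLe.of_sobSeq_le (hd : HsLe t' d B) (h : ∀ k, sobSeq t c k ≤ sobSeq t' d k) :
    HsLe t c B := by
  have := hsLe_of_sobSeq_le_mul zero_le_one (fun k => (h k).trans_eq (one_mul _).symm)
    (memHs_iff_summable_sobSeq_sq.mp hd.1)
  rw [one_mul, ← hsNorm_eq_sqrt_tsum_sobSeq_sq] at this
  exact this.trans_le hd.2

lemma HsLe.of_index_le (h : HsLe t' c B) (ht : t ≤ t') : HsLe t c B :=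
  h.of_sobSeq_le fun k => mul_le_mul_of_nonneg_right (wt_mono (by linarith) k) (norm_nonneg _)

lemma HsLe.neg (h : HsLe t c B) : HsLe t (-c) B :=
  h.of_sobSeq_le fun k => by simp [sobSeq]

lemma HsLe.smul (r : ℝ) (h : HsLe t c B) : HsLe t (r • c) (|r| * B) := by
  have := hsLe_of_sobSeq_le_mul (t := t) (c := r • c) (abs_nonneg r) (b := sobSeq t c)
    (fun k => by simp [sobSeq, mul_left_comm]) (memHs_iff_summable_sobSeq_sq.mp h.1)
  rw [← hsNorm_eq_sqrt_tsum_sobSeq_sq] at this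
  exact this.trans_le (mul_le_mul_of_nonneg_left h.2 (abs_nonneg r))

lemma HsLe.add (hc : HsLe t c B) (hd : HsLe t d B') : HsLe t (c + d) (B + B') := by
  obtain ⟨hsum, hle⟩ := sqrt_tsum_sq_tsum_le (G := ![sobSeq t c, sobSeq t d])
    (fun i => by fin_cases i <;> exact sobSeq_nonneg _ _)
    (fun i => by
      fin_cases i
      exacts [memHs_iff_summable_sobSeq_sq.mp hc.1, memHs_iff_summable_sobSeq_sq.mp hd.1])
    Summable.of_finite
  simp only [tsum_fintype, Fin.sum_univ_two, Matrix.cons_val_zero, Matrix.cons_val_one,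
    ← hsNorm_eq_sqrt_tsum_sobSeq_sq] at hsum hle
  have hpt : ∀ k, sobSeq t (c + d) k ≤ 1 * (sobSeq t c k + sobSeq t d k) := fun k => by
    rw [one_mul, sobSeq, sobSeq, sobSeq, ← mul_add]
    exact mul_le_mul_of_nonneg_left (norm_add_le _ _) (wt_nonneg _ _)
  refine (hsLe_of_sobSeq_le_mul zero_le_one hpt hsum).trans_le ?_
  rw [one_mul]
  exact hle.trans (add_le_add hc.2 hd.2)

lemma hsLe_tsumFC {F : ℕ → FC} {ε : ℕ → ℝ} (hF : ∀ n, HsLe t (F n) (ε n)) (hε : Summable ε) :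
    HsLe t (tsumFC F) (∑' n, ε n) := by
  have hnorm : Summable fun n => hsNorm t (F n) :=
    hε.of_nonneg_of_le (fun n => hsNorm_nonneg _ _) fun n => (hF n).2
  obtain ⟨hsum, hle⟩ := sqrt_tsum_sq_tsum_le (G := fun n k => sobSeq t (F n) k)
    (fun n k => sobSeq_nonneg _ _ _) (fun n => memHs_iff_summable_sobSeq_sq.mp (hF n).1)
    (by simpa only [← hsNorm_eq_sqrt_tsum_sobSeq_sq] using hnorm)
  have hpt : ∀ k, sobSeq t (tsumFC F) k ≤ 1 * ∑' n, sobSeq t (F n) k := fun k => by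
    have hsk : Summable fun n => sobSeq t (F n) k :=
      hnorm.of_nonneg_of_le (fun n => sobSeq_nonneg _ _ _) fun n => sobSeq_le_hsNorm (hF n).1 k
    rw [one_mul, sobSeq, tsumFC]
    simp only [sobSeq, tsum_mul_left]
    exact mul_le_mul_of_nonneg_left (norm_tsum_le_tsum_norm
      ((summable_mul_left_iff (wt_pos _ k).ne').mp hsk)) (wt_nonneg _ _)
  refine (hsLe_of_sobSeq_le_mul zero_le_one hpt hsum).trans_le ?_
  simp only [one_mul, ← hsNorm_eq_sqrt_tsum_sobSeq_sq] at hle ⊢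
  exact hle.trans (hnorm.tsum_le_tsum (fun n => (hF n).2) hε)

lemma HsLe.D1 (h : HsLe (t + 1) c B) : HsLe t (FC.D1 c) B :=
  h.of_sobSeq_le fun k => by
    have hk : |(k : ℝ)| ≤ wt (1 / 2) k := by
      rw [← Real.sqrt_sq_eq_abs, wt, ← Real.sqrt_eq_rpow]
      exact Real.sqrt_le_sqrt (by linarith)
    calc sobSeq t (FC.D1 c) k = wt (t / 2) k * (|(k : ℝ)| * ‖c k‖) := by
          simp [sobSeq, FC.D1, Complex.norm_intCast]
      _ ≤ wt (t / 2) k * (wt (1 / 2) k * ‖c k‖) := by gcongr; exact wt_nonneg _ _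
      _ = sobSeq (t + 1) c k := by rw [sobSeq, add_div, wt_add, mul_assoc]

lemma HsLe.helm (h : HsLe (t + 2) c B) : HsLe t (FC.helm c) B :=
  h.of_sobSeq_le fun k => le_of_eq <| by
    rw [sobSeq, sobSeq, add_div, div_self two_ne_zero, wt_add, wt_one, FC.helm, mult, norm_mul,
      Complex.norm_real, Real.norm_of_nonneg (by positivity), mul_assoc]

lemma HsLe.helmInv (h : HsLe t c B) : HsLe (t + 2) (FC.helmInv c) B :=
  h.of_sobSeq_le fun k => le_of_eq <| by
    rw [sobSeq, sobSeq, add_div, div_self two_ne_zero, wt_add, wt_one, FC.helmInv, mult,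
      norm_mul, Complex.norm_real, Real.norm_of_nonneg (by positivity), mul_assoc,
      mul_inv_cancel_left₀ (by positivity)]

end HsLe

def κ : ℝ := ∑' j : ℤ, wt (-2) j

lemma summable_wt_neg_two : Summable fun j : ℤ => wt (-2) j := by
  refine Summable.of_norm_bounded_eventually (Real.summable_one_div_int_pow.mpr one_lt_two) ?_
  filter_upwards [Filter.eventually_cofinite_ne 0] with j hj
  have hj2 : (0 : ℝ) < (j : ℝ) ^ 2 := by positivity
  rw [Real.norm_of_nonneg (wt_nonneg _ _), wt, Real.rpow_neg (by positivity), Real.rpow_two,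
    ← one_div]
  exact one_div_le_one_div_of_le hj2 (by nlinarith)

lemma tsum_sobSeq_le {r B : ℝ} {f : FC} (h : HsLe (r + 2) f B) :
    Summable (sobSeq r f) ∧ ∑' j, sobSeq r f j ≤ √κ * B := by
  have hw : ∀ j, wt (-1) j ^ 2 = wt (-2) j := fun j => by rw [sq, ← wt_add]; norm_num
  have he : ∀ j, wt (-1) j * sobSeq (r + 2) f j = sobSeq r f j := fun j => by
    rw [sobSeq, sobSeq, ← mul_assoc, ← wt_add]; ring_nf
  obtain ⟨hs, hle⟩ := tsum_mul_le_sqrt_mul_sqrt (wt_nonneg (-1)) (sobSeq_nonneg (r + 2) f)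
    (by simpa only [hw] using summable_wt_neg_two) (memHs_iff_summable_sobSeq_sq.mp h.1)
  simp only [he, hw, ← hsNorm_eq_sqrt_tsum_sobSeq_sq] at hs hle
  exact ⟨hs, hle.trans (mul_le_mul_of_nonneg_left h.2 (Real.sqrt_nonneg _))⟩

lemma sobSeq_mul_le {t : ℝ} {f g : FC} (hf : Summable (sobSeq |t| f)) (hg : memHs t g) (k : ℤ) :
    sobSeq t (mul f g) k ≤ 2 ^ (|t| / 2) * ∑' j, sobSeq |t| f j * sobSeq t g (k - j) := by
  have hterm : ∀ j, wt (t / 2) k * ‖f j * g (k - j)‖ ≤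
      2 ^ (|t| / 2) * (sobSeq |t| f j * sobSeq t g (k - j)) := fun j => by
    have hpeetre := wt_le_two_rpow_mul (t / 2) k j
    rw [abs_div, abs_two] at hpeetre
    calc wt (t / 2) k * ‖f j * g (k - j)‖
        ≤ 2 ^ (|t| / 2) * (wt (|t| / 2) j * wt (t / 2) (k - j)) * (‖f j‖ * ‖g (k - j)‖) := by
          rw [norm_mul]; gcongr
      _ = 2 ^ (|t| / 2) * (sobSeq |t| f j * sobSeq t g (k - j)) := by simp only [sobSeq]; ring
  have hconv : Summable fun j => sobSeq |t| f j * sobSeq t g (k - j) :=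
    (hf.mul_right (hsNorm t g)).of_nonneg_of_le (fun j => mul_nonneg (sobSeq_nonneg _ _ _)
      (sobSeq_nonneg _ _ _)) fun j => mul_le_mul_of_nonneg_left (sobSeq_le_hsNorm hg _)
      (sobSeq_nonneg _ _ _)
  have hnorm : Summable fun j => ‖f j * g (k - j)‖ :=
    (summable_mul_left_iff (wt_pos (t / 2) k).ne').mp
      ((hconv.mul_left _).of_nonneg_of_le
        (fun j => mul_nonneg (wt_nonneg _ _) (norm_nonneg _)) hterm)
  calc sobSeq t (mul f g) k = wt (t / 2) k * ‖∑' j, f j * g (k - j)‖ := rfl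
    _ ≤ ∑' j, wt (t / 2) k * ‖f j * g (k - j)‖ := by
      rw [tsum_mul_left]
      exact mul_le_mul_of_nonneg_left (norm_tsum_le_tsum_norm hnorm) (wt_nonneg _ _)
    _ ≤ ∑' j, 2 ^ (|t| / 2) * (sobSeq |t| f j * sobSeq t g (k - j)) :=
      (hnorm.mul_left _).tsum_le_tsum hterm (hconv.mul_left _)
    _ = 2 ^ (|t| / 2) * ∑' j, sobSeq |t| f j * sobSeq t g (k - j) := tsum_mul_left

lemma HsLe.mul {t A B : ℝ} {f g : FC} (hf : HsLe (|t| + 2) f A) (hg : HsLe t g B) :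
    HsLe t (FC.mul f g) (2 ^ (|t| / 2) * √κ * A * B) := by
  obtain ⟨hf1, hfA⟩ := tsum_sobSeq_le hf
  obtain ⟨hsum, hyoung⟩ := sqrt_tsum_sq_conv_le (sobSeq_nonneg |t| f) (sobSeq_nonneg t g) hf1
    (memHs_iff_summable_sobSeq_sq.mp hg.1)
  rw [← hsNorm_eq_sqrt_tsum_sobSeq_sq] at hyoung
  refine (hsLe_of_sobSeq_le_mul (by positivity) (sobSeq_mul_le hf1 hg.1) hsum).trans_le ?_
  have hA := hf.nonneg
  calc 2 ^ (|t| / 2) * √(∑' k, (∑' j, sobSeq |t| f j * sobSeq t g (k - j)) ^ 2)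
      ≤ 2 ^ (|t| / 2) * ((√κ * A) * B) := by
        gcongr
        exact hyoung.trans (mul_le_mul hfA hg.2 (hsNorm_nonneg _ _) (by positivity))
    _ = 2 ^ (|t| / 2) * √κ * A * B := by ring

def lieConst (t : ℝ) : ℝ := 2 * 2 ^ (|t| / 2) * √κ

lemma lieConst_nonneg (t : ℝ) : 0 ≤ lieConst t := by unfold lieConst; positivity

lemma HsLe.lie {t A B : ℝ} {ξ c : FC} (hξ : HsLe (|t| + 3) ξ A) (hc : HsLe (t + 1) c B) :
    HsLe t (FC.lie ξ c) (lieConst t * A * B) := by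
  have h₁ := (hξ.of_index_le (by linarith)).mul hc.D1
  have h₂ := (hξ.of_index_le (t := |t| + 2 + 1) (by linarith)).D1.mul (hc.of_index_le (by linarith))
  exact (h₁.add h₂).trans_le (le_of_eq (by unfold lieConst; ring))

lemma HsLe.lie2 {t A B : ℝ} {ξ c : FC} (hξ : HsLe (|t| + 4) ξ A) (hc : HsLe (t + 2) c B) :
    HsLe t (FC.lie2 ξ c) (lieConst t * lieConst (t + 1) * A ^ 2 * B) := by
  have habs : |t + 1| ≤ |t| + 1 := by simpa using abs_add_le t 1
  have hinner := (hξ.of_index_le (t := |t + 1| + 3) (by linarith)).lie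
    (hc.of_index_le (t := t + 1 + 1) (by linarith))
  exact ((hξ.of_index_le (by linarith)).lie hinner).trans_le (le_of_eq (by ring))

lemma hsLe_tsumFC_lie2 {t B : ℝ} {ξ : ℕ → FC} {c : FC} {A : ℕ → ℝ}
    (hξ : ∀ n, HsLe (|t| + 4) (ξ n) (A n)) (hA : Summable fun n => A n ^ 2)
    (hc : HsLe (t + 2) c B) :
    HsLe t (tsumFC fun n => FC.lie2 (ξ n) c)
      (lieConst t * lieConst (t + 1) * (∑' n, A n ^ 2) * B) := by
  have h := hsLe_tsumFC (fun n => (hξ n).lie2 hc) ((hA.mul_left _).mul_right B)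
  rwa [tsum_mul_right, tsum_mul_left] at h

lemma pairNorm_nonneg (s₁ s₂ : ℝ) (c d : FC) : 0 ≤ pairNorm s₁ s₂ c d := Real.sqrt_nonneg _

lemma pairNorm_le_add (s₁ s₂ : ℝ) (c d : FC) : pairNorm s₁ s₂ c d ≤ hsNorm s₁ c + hsNorm s₂ d :=
  Real.sqrt_le_iff.mpr ⟨add_nonneg (hsNorm_nonneg _ _) (hsNorm_nonneg _ _),
    by nlinarith [hsNorm_nonneg s₁ c, hsNorm_nonneg s₂ d]⟩

lemma hsNorm_le_pairNorm_left (s₁ s₂ : ℝ) (c d : FC) : hsNorm s₁ c ≤ pairNorm s₁ s₂ c d :=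
  Real.le_sqrt_of_sq_le (le_add_of_nonneg_right (sq_nonneg _))

lemma hsNorm_le_pairNorm_right (s₁ s₂ : ℝ) (c d : FC) : hsNorm s₂ d ≤ pairNorm s₁ s₂ c d :=
  Real.le_sqrt_of_sq_le (le_add_of_nonneg_left (sq_nonneg _))

end FC

open FC

section CamassaHolm

variable {s : ℝ} {ξ : ℕ → FC}

lemma exists_hsNorm_gCH1_le (hs : 3 ≤ s) (hξ : ∀ k, memHs (s + 2) (ξ k))
    (hξsum : Summable fun k => hsNorm (s + 2) (ξ k)) :
    ∃ C, 0 ≤ C ∧ ∀ u, memHs s u →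
      hsNorm (s - 2) (gCH1 ξ u) ≤ C * (1 + hsNorm s u) * hsNorm s u := by
  have hX := (sqrt_tsum_sq_le_tsum_of_le (fun k => hsNorm_nonneg _ _) (fun k => le_rfl)
    hξsum).1
  have habs₂ : |s - 2| = s - 2 := abs_of_nonneg (by linarith)
  have habs₄ : |s - 4| ≤ s - 2 := abs_le.mpr ⟨by linarith, by linarith⟩
  set K₁ := 2 ^ (|s - 2| / 2) * √κ
  set K₂ := lieConst (s - 4) * lieConst (s - 4 + 1) * ∑' k, hsNorm (s + 2) (ξ k) ^ 2
  have hK₁ : 0 ≤ K₁ := by positivity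
  have hK₂ : 0 ≤ K₂ := by
    have := lieConst_nonneg (s - 4); have := lieConst_nonneg (s - 4 + 1); positivity
  refine ⟨K₁ + K₂, by positivity, fun u hu => ?_⟩
  have hu' := hsLe_hsNorm hu
  have h₁ := (hu'.of_index_le (by rw [habs₂]; linarith)).mul (hu'.of_index_le (by linarith)).D1
  have h₂ := (hsLe_tsumFC_lie2 (t := s - 4)
    (fun k => (hsLe_hsNorm (hξ k)).of_index_le (by linarith)) hX
    (hu'.of_index_le (by linarith)).helm).helmInv
  have hN := hsNorm_nonneg s u
  calc hsNorm (s - 2) (gCH1 ξ u) ≤ K₁ * hsNorm s u * hsNorm s u + |1 / 2| * (K₂ * hsNorm s u) :=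
        (h₁.neg.add ((h₂.of_index_le (t := s - 2) (by linarith)).smul (1 / 2))).2
    _ ≤ (K₁ + K₂) * (1 + hsNorm s u) * hsNorm s u := by
        rw [abs_of_pos one_half_pos]
        nlinarith [mul_nonneg hK₁ hN, mul_nonneg (mul_nonneg hK₂ hN) hN]

lemma exists_hsNorm_gCH2_le (hs : 3 ≤ s) (hξ : ∀ k, memHs (s + 2) (ξ k))
    (hξsum : Summable fun k => hsNorm (s + 2) (ξ k)) :
    ∃ C, 0 ≤ C ∧ ∀ u η, memHs s u → memHs (s - 1) η →
      hsNorm (s - 3) (gCH2 ξ u η) ≤ C * (1 + hsNorm s u) * hsNorm (s - 1) η := by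
  have hX := (sqrt_tsum_sq_le_tsum_of_le (fun k => hsNorm_nonneg _ _) (fun k => le_rfl)
    hξsum).1
  have habs₃ : |s - 3| = s - 3 := abs_of_nonneg (by linarith)
  set K₁ := 2 ^ (|s - 3| / 2) * √κ
  set K₂ := lieConst (s - 3) * lieConst (s - 3 + 1) * ∑' k, hsNorm (s + 2) (ξ k) ^ 2
  have hK₁ : 0 ≤ K₁ := by positivity
  have hK₂ : 0 ≤ K₂ := by
    have := lieConst_nonneg (s - 3); have := lieConst_nonneg (s - 3 + 1); positivity
  refine ⟨K₁ + K₂, by positivity, fun u η hu hη => ?_⟩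
  have hu' := hsLe_hsNorm hu
  have hη' := hsLe_hsNorm hη
  have h₁ := (hu'.of_index_le (by rw [habs₃]; linarith)).mul (hη'.of_index_le (by linarith)).D1
  have h₂ := hsLe_tsumFC_lie2 (t := s - 3)
    (fun k => (hsLe_hsNorm (hξ k)).of_index_le (by rw [habs₃]; linarith)) hX
    (hη'.of_index_le (by linarith))
  have hN := hsNorm_nonneg s u
  have hM := hsNorm_nonneg (s - 1) η
  calc hsNorm (s - 3) (gCH2 ξ u η)
      ≤ K₁ * hsNorm s u * hsNorm (s - 1) η + |1 / 2| * (K₂ * hsNorm (s - 1) η) :=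
        (h₁.neg.add (h₂.smul (1 / 2))).2
    _ ≤ (K₁ + K₂) * (1 + hsNorm s u) * hsNorm (s - 1) η := by
        rw [abs_of_pos one_half_pos]
        nlinarith [mul_nonneg hK₁ hM, mul_nonneg (mul_nonneg hK₂ hN) hM]

lemma pairNorm_hCH_le (hs : 3 ≤ s) (hξ : ∀ k, memHs (s + 2) (ξ k)) (k : ℕ) {u η : FC}
    (hu : memHs s u) (hη : memHs (s - 1) η) :
    pairNorm (s - 1) (s - 2) (hCH1 ξ k u) (hCH2 ξ k η) ≤
      (lieConst (s - 3) + lieConst (s - 2)) * hsNorm (s + 2) (ξ k) * pairNorm s (s - 1) u η := by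
  have hξ' := hsLe_hsNorm (hξ k)
  have hu' := (hsLe_hsNorm hu).trans_le (hsNorm_le_pairNorm_left s (s - 1) u η)
  have hη' := (hsLe_hsNorm hη).trans_le (hsNorm_le_pairNorm_right s (s - 1) u η)
  have habs₂ : |s - 2| = s - 2 := abs_of_nonneg (by linarith)
  have habs₃ : |s - 3| = s - 3 := abs_of_nonneg (by linarith)
  have h₁ := ((hξ'.of_index_le (t := |s - 3| + 3) (by rw [habs₃]; linarith)).lie
    (hu'.of_index_le (t := s - 3 + 1 + 2) (by linarith)).helm).helmInv.neg
  have h₂ := ((hξ'.of_index_le (t := |s - 2| + 3) (by rw [habs₂]; linarith)).lie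
    (hη'.of_index_le (t := s - 2 + 1) (by linarith))).neg
  calc pairNorm (s - 1) (s - 2) (hCH1 ξ k u) (hCH2 ξ k η)
      ≤ hsNorm (s - 1) (hCH1 ξ k u) + hsNorm (s - 2) (hCH2 ξ k η) := pairNorm_le_add _ _ _ _
    _ ≤ _ := add_le_add (h₁.of_index_le (by linarith)).2 h₂.2
    _ = _ := by ring

lemma exists_pairNorm_drift_le (hs : 3 ≤ s) (hξ : ∀ k, memHs (s + 2) (ξ k))
    (hξsum : Summable fun k => hsNorm (s + 2) (ξ k)) :
    ∃ C, 0 ≤ C ∧ ∀ u η, memHs s u → memHs (s - 1) η →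
      pairNorm (s - 2) (s - 3) (gCH1 ξ u) (gCH2 ξ u η) ≤ C * (1 + pairNorm s (s - 1) u η ^ 2) := by
  obtain ⟨C₁, hC₁, h₁⟩ := exists_hsNorm_gCH1_le hs hξ hξsum
  obtain ⟨C₂, hC₂, h₂⟩ := exists_hsNorm_gCH2_le hs hξ hξsum
  refine ⟨2 * (C₁ + C₂), by positivity, fun u η hu hη => ?_⟩
  have hNu := hsNorm_le_pairNorm_left s (s - 1) u η
  have hNη := hsNorm_le_pairNorm_right s (s - 1) u η
  have hu0 := hsNorm_nonneg s u
  have hη0 := hsNorm_nonneg (s - 1) η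
  have hP := pairNorm_nonneg s (s - 1) u η
  set P := pairNorm s (s - 1) u η
  calc pairNorm (s - 2) (s - 3) (gCH1 ξ u) (gCH2 ξ u η)
      ≤ hsNorm (s - 2) (gCH1 ξ u) + hsNorm (s - 3) (gCH2 ξ u η) := pairNorm_le_add _ _ _ _
    _ ≤ C₁ * (1 + hsNorm s u) * hsNorm s u + C₂ * (1 + hsNorm s u) * hsNorm (s - 1) η :=
        add_le_add (h₁ u hu) (h₂ u η hu hη)
    _ ≤ C₁ * (1 + P) * P + C₂ * (1 + P) * P := by gcongr
    _ ≤ 2 * (C₁ + C₂) * (1 + P ^ 2) := by nlinarith [sq_nonneg (P - 1)]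

end CamassaHolm

theorem statement2_general (s : ℝ) (hs : 7 / 2 < s) (ξ : ℕ → FC)
    (hξmem : ∀ σ : ℝ, 0 ≤ σ → ∀ k : ℕ, FC.memHs σ (ξ k))
    (hξsum : ∀ σ : ℝ, 0 ≤ σ → Summable fun k : ℕ => FC.hsNorm σ (ξ k)) :
    ∃ C > (0 : ℝ), ∀ u η : FC,
      FC.memHs s u → FC.memHs (s - 1) η → FC.isReal u → FC.isReal η →
      (FC.pairNorm (s - 2) (s - 3) (gCH1 ξ u) (gCH2 ξ u η)
          ≤ C * (1 + FC.pairNorm s (s - 1) u η ^ 2)) ∧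
      (Summable (fun k : ℕ => FC.pairNorm (s - 1) (s - 2) (hCH1 ξ k u) (hCH2 ξ k η) ^ 2) ∧
        Real.sqrt (∑' k : ℕ, FC.pairNorm (s - 1) (s - 2) (hCH1 ξ k u) (hCH2 ξ k η) ^ 2)
          ≤ C * FC.pairNorm s (s - 1) u η) := by
  have hs₃ : 3 ≤ s := by linarith
  have hξ := hξmem (s + 2) (by linarith)
  have hX := hξsum (s + 2) (by linarith)
  obtain ⟨C, hC, hdrift⟩ := exists_pairNorm_drift_le hs₃ hξ hX
  set K := (lieConst (s - 3) + lieConst (s - 2)) * ∑' k, hsNorm (s + 2) (ξ k)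
  have hK : 0 ≤ K := by
    have := lieConst_nonneg (s - 3); have := lieConst_nonneg (s - 2)
    exact mul_nonneg (by positivity) (tsum_nonneg fun k => hsNorm_nonneg _ _)
  refine ⟨C + K + 1, by positivity, fun u η hu hη _ _ => ?_⟩
  have hP := pairNorm_nonneg s (s - 1) u η
  obtain ⟨hsum, hle⟩ := sqrt_tsum_sq_le_tsum_of_le (fun k => pairNorm_nonneg _ _ _ _)
    (fun k => pairNorm_hCH_le hs₃ hξ k hu hη) ((hX.mul_left _).mul_right _)
  refine ⟨(hdrift u η hu hη).trans ?_, hsum, hle.trans ?_⟩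
  · gcongr
    linarith
  · rw [tsum_mul_right, tsum_mul_left]
    gcongr
    linarith

/-- Let `s > 7/2` and `Σ_k ‖ξ_k‖_{H^σ} < ∞` for all `σ ≥ 0`.  Then there is
`C > 0` such that `‖g(X)‖_{H^{s-2}×H^{s-3}} ≤ C (1 + ‖(u,η)‖²_{H^s×H^{s-1}})` and
`(Σ_k ‖h^k(X)‖²_{H^{s-1}×H^{s-2}})^{1/2} ≤ C ‖(u,η)‖_{H^s×H^{s-1}}`. -/
theorem statement2 (s : ℝ) (hs : 7 / 2 < s) (ξ : ℕ → FC)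
    (hξmem : ∀ σ : ℝ, 0 ≤ σ → ∀ k : ℕ, FC.memHs σ (ξ k))
    (hξreal : ∀ k : ℕ, FC.isReal (ξ k))
    (hξsum : ∀ σ : ℝ, 0 ≤ σ → Summable fun k : ℕ => FC.hsNorm σ (ξ k)) :
    ∃ C > (0 : ℝ), ∀ u η : FC,
      FC.memHs s u → FC.memHs (s - 1) η → FC.isReal u → FC.isReal η →
      (FC.pairNorm (s - 2) (s - 3) (gCH1 ξ u) (gCH2 ξ u η)
          ≤ C * (1 + FC.pairNorm s (s - 1) u η ^ 2)) ∧
      (Summable (fun k : ℕ => FC.pairNorm (s - 1) (s - 2) (hCH1 ξ k u) (hCH2 ξ k η) ^ 2) ∧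
        Real.sqrt (∑' k : ℕ, FC.pairNorm (s - 1) (s - 2) (hCH1 ξ k u) (hCH2 ξ k η) ^ 2)
          ≤ C * FC.pairNorm s (s - 1) u η) :=
  statement2_general s hs ξ hξmem hξsum
end
end

section
/- Let s > 7/2. There is a constant C = C(s) > 0 such that for all ξ ∈ H^s(𝕋) and all v ∈ H^{s-2}(𝕋): |(D^{s-2} 𝓛_ξ v, D^{s-2} v)_{L²}| ≤ C ‖ξ‖_{H^s} ‖v‖²_{H^{s-2}}. -/
/-!
With `σ = s - 2`, on the Fourier side `𝓛_ξ v = ∂ₓ(ξ v)`, so the `k`-th term of `(D^σ 𝓛_ξ v, D^σ v)`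
has real part `-W(k) ∑ₘ φ(k, m)`, where `W(x) = x ⟨x⟩^{2σ}` and
`φ(k, m) = Im (ξ̂(k-m) v̂(m) conj v̂(k))`. As `ξ` is real, `φ` is antisymmetric, so the double sum
is `½ ∑ₖₘ (W(k) - W(m)) φ(k, m)`. The commutator bound `|W(k) - W(m)| ≲ ⟨k-m⟩^{σ+1} ⟨k⟩^σ ⟨m⟩^σ` and
Young's inequality bound this by `∑ₗ ⟨l⟩^{σ+1} |ξ̂(l)| · ‖v‖²_{H^σ}`, and Cauchy–Schwarz bounds the
weighted Wiener norm by `‖ξ‖_{H^s}` because `s - (σ + 1) > 1/2`.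

The double sum does not converge absolutely, so the symmetrization is done for `θ(k/M) W(k)` with
a Lipschitz cutoff `θ`, which obeys the same commutator bound uniformly in `M`; then `M → ∞` by
dominated convergence.
-/

noncomputable section
open scoped BigOperators

open Real Filter Topology Function

theorem rpow_sub_rpow_le_mul_sub {p a b : ℝ} (hp : 1 ≤ p) (ha : 0 < a) (hb : 0 ≤ b) :
    a ^ p - b ^ p ≤ p * a ^ (p - 1) * (a - b) := by
  have hbern := one_add_mul_self_le_rpow_one_add (s := b / a - 1)
    (by linarith [div_nonneg hb ha.le]) hp
  rw [add_sub_cancel, div_rpow hb ha.le, le_div_iff₀ (rpow_pos_of_pos ha p)] at hbern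
  have hap : a ^ p = a ^ (p - 1) * a := by rw [← rpow_add_one ha.ne']; ring_nf
  have : p * (b / a - 1) * a ^ p = p * a ^ (p - 1) * (b - a) := by
    rw [hap]; field_simp
  nlinarith

theorem abs_mul_one_add_sq_rpow_sub_le {σ x y : ℝ} (hσ : 1 ≤ σ) (hyx : |y| ≤ |x|) :
    |x * (1 + x ^ 2) ^ σ - y * (1 + y ^ 2) ^ σ| ≤ (1 + 2 * σ) * |x - y| * (1 + x ^ 2) ^ σ := by
  have hyx2 : y ^ 2 ≤ x ^ 2 := sq_le_sq.2 hyx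
  have hA : (1 + x ^ 2) ^ σ = (1 + x ^ 2) ^ (σ - 1) * (1 + x ^ 2) := by
    rw [← rpow_add_one (by positivity)]; ring_nf
  set A := (1 + x ^ 2) ^ σ
  set B := (1 + y ^ 2) ^ σ
  have hBA : B ≤ A := rpow_le_rpow (by positivity) (by linarith) (by linarith)
  -- the mean value bound for `A - B` loses a power of `1 + x²`; `|y| |x + y| ≤ 2 (1 + x²)`
  -- gives it back
  have hmvt : A - B ≤ σ * (1 + x ^ 2) ^ (σ - 1) * (x ^ 2 - y ^ 2) := by
    have := rpow_sub_rpow_le_mul_sub hσ (a := 1 + x ^ 2) (b := 1 + y ^ 2) (by positivity)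
      (by positivity)
    convert this using 2; ring
  have hy : |y| * |x + y| ≤ 2 * (1 + x ^ 2) := by
    nlinarith [abs_add_le x y, abs_nonneg y, abs_nonneg x, sq_abs x, sq_abs y,
      abs_nonneg (x + y)]
  have key : |y| * (A - B) ≤ 2 * σ * |x - y| * A := by
    calc |y| * (A - B) ≤ |y| * (σ * (1 + x ^ 2) ^ (σ - 1) * (|x - y| * |x + y|)) := by
          refine mul_le_mul_of_nonneg_left (hmvt.trans ?_) (abs_nonneg y)
          gcongr
          calc x ^ 2 - y ^ 2 = (x - y) * (x + y) := by ring
            _ ≤ |x - y| * |x + y| := by rw [← abs_mul]; exact le_abs_self _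
      _ = σ * (1 + x ^ 2) ^ (σ - 1) * |x - y| * (|y| * |x + y|) := by ring
      _ ≤ σ * (1 + x ^ 2) ^ (σ - 1) * |x - y| * (2 * (1 + x ^ 2)) := by gcongr
      _ = 2 * σ * |x - y| * A := by rw [hA]; ring
  calc |x * A - y * B| = |(x - y) * A + y * (A - B)| := by ring_nf
    _ ≤ |x - y| * A + |y| * (A - B) := by
        refine (abs_add_le _ _).trans_eq ?_
        rw [abs_mul, abs_mul, abs_of_pos (by positivity : (0:ℝ) < A),
          abs_of_nonneg (sub_nonneg.2 hBA)]
    _ ≤ (1 + 2 * σ) * |x - y| * A := by linarith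

theorem one_add_sq_rpow_le_two_rpow_mul {t : ℝ} (ht : 0 ≤ t) (x y : ℝ) :
    (1 + x ^ 2) ^ t ≤ 2 ^ t * (1 + y ^ 2) ^ t * (1 + (x - y) ^ 2) ^ t := by
  rw [← mul_rpow (by positivity) (by positivity), ← mul_rpow (by positivity) (by positivity)]
  exact rpow_le_rpow (by positivity)
    (by nlinarith [sq_nonneg (y - (x - y)), sq_nonneg (y * (x - y))]) ht

theorem abs_le_one_add_sq_rpow {t : ℝ} (ht : 1 ≤ t) (x : ℝ) : |x| ≤ (1 + x ^ 2) ^ (t / 2) :=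
  calc |x| ≤ √(1 + x ^ 2) := abs_le_sqrt (by linarith)
    _ = (1 + x ^ 2) ^ (1 / 2 : ℝ) := sqrt_eq_rpow _
    _ ≤ (1 + x ^ 2) ^ (t / 2) :=
        rpow_le_rpow_of_exponent_le (by nlinarith [sq_nonneg x]) (by linarith)

theorem abs_mul_one_add_sq_rpow_le (t x : ℝ) :
    |x| * (1 + x ^ 2) ^ (t / 2) ≤ (1 + x ^ 2) ^ ((t + 1) / 2) :=
  calc |x| * (1 + x ^ 2) ^ (t / 2) ≤ (1 + x ^ 2) ^ (1 / 2 : ℝ) * (1 + x ^ 2) ^ (t / 2) := by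
        gcongr; simpa using abs_le_one_add_sq_rpow le_rfl x
    _ = (1 + x ^ 2) ^ ((t + 1) / 2) := by rw [← rpow_add (by positivity)]; ring_nf

theorem abs_sub_mul_one_add_sq_rpow_le {σ : ℝ} (hσ : 0 ≤ σ) (x y : ℝ) :
    |x - y| * (1 + x ^ 2) ^ σ ≤
      2 ^ (σ / 2) * (1 + (x - y) ^ 2) ^ ((σ + 1) / 2) *
        ((1 + x ^ 2) ^ (σ / 2) * (1 + y ^ 2) ^ (σ / 2)) := by
  have hsplit : (1 + x ^ 2) ^ σ = (1 + x ^ 2) ^ (σ / 2) * (1 + x ^ 2) ^ (σ / 2) := by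
    rw [← rpow_add (by positivity)]; ring_nf
  calc |x - y| * (1 + x ^ 2) ^ σ
      ≤ |x - y| * ((1 + x ^ 2) ^ (σ / 2) *
          (2 ^ (σ / 2) * (1 + y ^ 2) ^ (σ / 2) * (1 + (x - y) ^ 2) ^ (σ / 2))) := by
        rw [hsplit]; gcongr; exact one_add_sq_rpow_le_two_rpow_mul (by positivity) x y
    _ = 2 ^ (σ / 2) * (|x - y| * (1 + (x - y) ^ 2) ^ (σ / 2)) *
          ((1 + x ^ 2) ^ (σ / 2) * (1 + y ^ 2) ^ (σ / 2)) := by ring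
    _ ≤ _ := by gcongr; exact abs_mul_one_add_sq_rpow_le _ _

def cutoff (M x : ℝ) : ℝ := max 0 (min 1 (2 - |x| / M))

theorem cutoff_nonneg (M x : ℝ) : 0 ≤ cutoff M x := le_max_left _ _

theorem cutoff_le_one (M x : ℝ) : cutoff M x ≤ 1 := max_le zero_le_one (min_le_left _ _)

theorem cutoff_eq_zero {M x : ℝ} (hM : 0 < M) (hx : 2 * M ≤ |x|) : cutoff M x = 0 := by
  refine max_eq_left (min_le_of_right_le ?_)
  rw [sub_nonpos, le_div_iff₀ hM]; linarith

theorem cutoff_eq_one {M x : ℝ} (hM : 0 < M) (hx : |x| ≤ M) : cutoff M x = 1 := by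
  have : |x| / M ≤ 1 := (div_le_one hM).2 hx
  rw [cutoff, min_eq_left (by linarith), max_eq_right zero_le_one]

theorem abs_cutoff_sub_le {M : ℝ} (hM : 0 < M) (x y : ℝ) :
    |cutoff M x - cutoff M y| ≤ |x - y| / M :=
  calc |cutoff M x - cutoff M y| ≤ |min 1 (2 - |x| / M) - min 1 (2 - |y| / M)| := by
        rw [cutoff, cutoff, max_comm 0, max_comm 0]
        exact abs_max_sub_max_le_abs _ _ 0
    _ ≤ |(2 - |x| / M) - (2 - |y| / M)| := by
        simpa using abs_min_sub_min_le_max 1 (2 - |x| / M) 1 (2 - |y| / M)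
    _ = |(|x| - |y|)| / M := by
        rw [show (2 - |x| / M) - (2 - |y| / M) = (|y| - |x|) / M by ring, abs_div,
          abs_of_pos hM, abs_sub_comm]
    _ ≤ |x - y| / M := div_le_div_of_nonneg_right (abs_abs_sub_abs_le_abs_sub x y) hM.le

theorem abs_cutoff_mul_sub_le_of_abs_le {σ M x y : ℝ} (hσ : 1 ≤ σ) (hM : 0 < M)
    (hyx : |y| ≤ |x|) :
    |cutoff M x * (x * (1 + x ^ 2) ^ σ) - cutoff M y * (y * (1 + y ^ 2) ^ σ)| ≤
      (2 * σ + 3) * |x - y| * (1 + x ^ 2) ^ σ := by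
  rcases le_or_gt (2 * M) |y| with hy | hy
  · rw [cutoff_eq_zero hM (hy.trans hyx), cutoff_eq_zero hM hy]
    simp only [zero_mul, sub_zero, abs_zero]
    positivity
  have hBA : (1 + y ^ 2) ^ σ ≤ (1 + x ^ 2) ^ σ :=
    rpow_le_rpow (by positivity) (by nlinarith [sq_le_sq.2 hyx]) (by linarith)
  -- the Lipschitz constant `1 / M` of the cutoff is paid for by `|y| < 2M`
  have hcut : |cutoff M x - cutoff M y| * |y * (1 + y ^ 2) ^ σ| ≤
      2 * |x - y| * (1 + x ^ 2) ^ σ := by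
    rw [abs_mul, abs_of_pos (by positivity : (0:ℝ) < (1 + y ^ 2) ^ σ)]
    calc |cutoff M x - cutoff M y| * (|y| * (1 + y ^ 2) ^ σ)
        ≤ |x - y| / M * (|y| * (1 + y ^ 2) ^ σ) := by gcongr; exact abs_cutoff_sub_le hM x y
      _ = |x - y| * (|y| / M) * (1 + y ^ 2) ^ σ := by ring
      _ ≤ |x - y| * 2 * (1 + x ^ 2) ^ σ := by
          gcongr; rw [div_le_iff₀ hM]; linarith
      _ = 2 * |x - y| * (1 + x ^ 2) ^ σ := by ring
  have hW := abs_mul_one_add_sq_rpow_sub_le hσ hyx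
  calc |cutoff M x * (x * (1 + x ^ 2) ^ σ) - cutoff M y * (y * (1 + y ^ 2) ^ σ)|
      = |cutoff M x * (x * (1 + x ^ 2) ^ σ - y * (1 + y ^ 2) ^ σ) +
          (cutoff M x - cutoff M y) * (y * (1 + y ^ 2) ^ σ)| := by ring_nf
    _ ≤ 1 * |x * (1 + x ^ 2) ^ σ - y * (1 + y ^ 2) ^ σ| +
          |cutoff M x - cutoff M y| * |y * (1 + y ^ 2) ^ σ| := by
        refine (abs_add_le _ _).trans ?_
        rw [abs_mul, abs_mul, abs_of_nonneg (cutoff_nonneg M x)]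
        gcongr; exact cutoff_le_one M x
    _ ≤ (2 * σ + 3) * |x - y| * (1 + x ^ 2) ^ σ := by linarith

theorem abs_cutoff_mul_sub_le {σ M : ℝ} (hσ : 1 ≤ σ) (hM : 0 < M) (x y : ℝ) :
    |cutoff M x * (x * (1 + x ^ 2) ^ σ) - cutoff M y * (y * (1 + y ^ 2) ^ σ)| ≤
      2 ^ (σ / 2) * (2 * σ + 3) * (1 + (x - y) ^ 2) ^ ((σ + 1) / 2) *
        ((1 + x ^ 2) ^ (σ / 2) * (1 + y ^ 2) ^ (σ / 2)) := by
  have hσ0 : 0 ≤ σ := by linarith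
  rcases le_total |y| |x| with hyx | hxy
  · refine (abs_cutoff_mul_sub_le_of_abs_le hσ hM hyx).trans ?_
    rw [mul_assoc]
    refine (mul_le_mul_of_nonneg_left (abs_sub_mul_one_add_sq_rpow_le hσ0 x y)
      (by positivity)).trans_eq ?_
    ring
  · rw [abs_sub_comm]
    refine (abs_cutoff_mul_sub_le_of_abs_le hσ hM hxy).trans ?_
    rw [mul_assoc]
    refine (mul_le_mul_of_nonneg_left (abs_sub_mul_one_add_sq_rpow_le hσ0 y x)
      (by positivity)).trans_eq ?_
    rw [show (y - x) ^ 2 = (x - y) ^ 2 by ring]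
    ring

theorem summable_mul_and_tsum_mul_le_sqrt {ι : Type*} {f g : ι → ℝ} (hf : ∀ i, 0 ≤ f i)
    (hg : ∀ i, 0 ≤ g i) (hf2 : Summable fun i => f i ^ 2) (hg2 : Summable fun i => g i ^ 2) :
    Summable (fun i => f i * g i) ∧
      ∑' i, f i * g i ≤ √(∑' i, f i ^ 2) * √(∑' i, g i ^ 2) := by
  simpa only [rpow_two, sqrt_eq_rpow, one_div] using
    summable_and_inner_le_Lp_mul_Lq_tsum_of_nonneg HolderConjugate.two_two hf hg
      (by simpa only [rpow_two] using hf2) (by simpa only [rpow_two] using hg2)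

section Convolution

variable {ι : Type*} [AddCommGroup ι]

theorem hasSum_mul_sub_snd {F g : ι → ℝ} (hF0 : ∀ l, 0 ≤ F l) (hF : Summable F)
    (hg0 : ∀ k, 0 ≤ g k) (hg : Summable g) :
    HasSum (fun p : ι × ι => F (p.1 - p.2) * g p.2) ((∑' l, F l) * ∑' k, g k) := by
  let shear : ι × ι ≃ ι × ι :=
    { toFun := fun q => (q.1 + q.2, q.2), invFun := fun p => (p.1 - p.2, p.2),
      left_inv := fun q => by simp, right_inv := fun p => by simp }
  have hprod := hF.mul_of_nonneg hg hF0 hg0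
  rw [← shear.hasSum_iff, hF.tsum_mul_tsum hg hprod]
  simpa [shear, Function.comp_def] using hprod.hasSum

theorem hasSum_mul_sub_fst {F g : ι → ℝ} (hF0 : ∀ l, 0 ≤ F l) (hF : Summable F)
    (hg0 : ∀ k, 0 ≤ g k) (hg : Summable g) :
    HasSum (fun p : ι × ι => F (p.1 - p.2) * g p.1) ((∑' l, F l) * ∑' k, g k) := by
  have := hasSum_mul_sub_snd (F := fun l => F (-l)) (fun l => hF0 _)
    ((Equiv.neg ι).summable_iff.2 hF) hg0 hg
  rw [show ∑' l, F (-l) = ∑' l, F l from (Equiv.neg ι).tsum_eq F] at this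
  rw [← (Equiv.prodComm ι ι).hasSum_iff]
  simpa [Function.comp_def] using this

/-- By antisymmetry `∑ₖ Gₖ ∑ₘ φₖₘ = ½ ∑ₖₘ (Gₖ - Gₘ) φₖₘ`, and the majorant `F (k - m) hₖ hₘ` of the
commutator sums to at most `‖F‖₁ ‖h‖₂²` by `2 hₖ hₘ ≤ hₖ² + hₘ²` (Young's inequality). -/
theorem abs_tsum_mul_tsum_le_of_antisymm {G F h : ι → ℝ} {φ : ι → ι → ℝ}
    (hG : G.HasFiniteSupport) (hφ : ∀ k, Summable fun m => |φ k m|)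
    (hanti : ∀ k m, φ m k = -φ k m) (hF0 : ∀ l, 0 ≤ F l) (hF : Summable F)
    (hh : Summable fun k => h k ^ 2)
    (hmaj : ∀ k m, |(G k - G m) * φ k m| ≤ F (k - m) * (h k * h m)) :
    |∑' k, G k * ∑' m, φ k m| ≤ (∑' l, F l) * (∑' k, h k ^ 2) / 2 := by
  set S : ι × ι → ℝ := fun p => G p.1 * φ p.1 p.2
  have hS : Summable S := by
    refine Summable.of_abs <| (summable_prod_of_nonneg fun _ => abs_nonneg _).2
      ⟨fun k => ?_, summable_of_hasFiniteSupport ?_⟩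
    · simpa [S, abs_mul] using (hφ k).mul_left |G k|
    · refine hG.subset fun k hk => ?_
      contrapose! hk
      simp [S, Function.notMem_support.1 hk]
  have hiter : ∑' k, G k * ∑' m, φ k m = ∑' p, S p := by
    rw [hS.tsum_prod' fun k => (hφ k).of_abs.mul_left (G k)]
    exact tsum_congr fun k => tsum_mul_left.symm
  have hswap : ∑' p : ι × ι, G p.2 * φ p.1 p.2 = -∑' p, S p := by
    rw [← (Equiv.prodComm ι ι).tsum_eq S, ← tsum_neg]
    exact tsum_congr fun p => by simp [S, hanti p.1 p.2]
  have hsym : ∑' p : ι × ι, (G p.1 - G p.2) * φ p.1 p.2 = 2 * ∑' p, S p := by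
    have hS' : Summable fun p : ι × ι => G p.2 * φ p.1 p.2 :=
      ((Equiv.prodComm ι ι).summable_iff.2 hS).neg.congr fun p => by simp [S, hanti p.1 p.2]
    simp_rw [sub_mul]
    rw [hS.tsum_sub hS', hswap]
    ring
  have hyoung : HasSum (fun p : ι × ι => F (p.1 - p.2) * (h p.1 ^ 2 + h p.2 ^ 2) / 2)
      ((∑' l, F l) * (∑' k, h k ^ 2)) := by
    have h2 := ((hasSum_mul_sub_fst hF0 hF (fun _ => sq_nonneg _) hh).add
      (hasSum_mul_sub_snd hF0 hF (fun _ => sq_nonneg _) hh)).div_const 2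
    rw [add_self_div_two] at h2
    exact h2.congr_fun fun p => by ring
  have hbound : |∑' p : ι × ι, (G p.1 - G p.2) * φ p.1 p.2| ≤ (∑' l, F l) * ∑' k, h k ^ 2 := by
    refine tsum_of_norm_bounded hyoung fun p =>
      (norm_eq_abs _).trans_le <| (hmaj p.1 p.2).trans ?_
    have := mul_le_mul_of_nonneg_left (two_mul_le_add_sq (h p.1) (h p.2)) (hF0 (p.1 - p.2))
    linarith
  rw [hsym, abs_mul, abs_two] at hbound
  rw [hiter]
  linarith

end Convolution

theorem abs_re_tsum_le_of_cutoff {β : Type*} {c : β → ℂ} {θ : ℕ → β → ℝ} {B : ℝ} (hB : 0 ≤ B)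
    (hθ : ∀ N k, |θ N k| ≤ 1) (hθ_lim : ∀ k, Tendsto (θ · k) atTop (𝓝 1))
    (hbound : ∀ N, |∑' k, θ N k * (c k).re| ≤ B) : |(∑' k, c k).re| ≤ B := by
  by_cases hc : Summable c
  · have hre : Summable fun k => (c k).re := (Complex.hasSum_re hc.hasSum).summable
    have hlim : Tendsto (fun N => ∑' k, θ N k * (c k).re) atTop (𝓝 (∑' k, (c k).re)) := by
      refine tendsto_tsum_of_dominated_convergence hre.abs (fun k => ?_) (.of_forall ?_)
      · simpa using (hθ_lim k).mul_const (c k).re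
      · intro N k
        rw [norm_mul, Real.norm_eq_abs]
        exact mul_le_of_le_one_left (abs_nonneg _) (hθ N k)
    rw [Complex.re_tsum hc]
    exact le_of_tendsto hlim.abs (.of_forall hbound)
  · simpa [tsum_eq_zero_of_not_summable hc] using hB

theorem summable_one_add_sq_rpow {r : ℝ} (hr : r < -1 / 2) :
    Summable fun l : ℤ => (1 + (l : ℝ) ^ 2) ^ r := by
  refine (summable_abs_int_rpow (b := -(2 * r)) (by linarith)).of_norm_bounded_eventually ?_
  filter_upwards [eventually_cofinite_ne 0] with l hl
  have hl2 : 0 < (l : ℝ) ^ 2 := by positivity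
  rw [norm_of_nonneg (by positivity), neg_neg, rpow_mul (abs_nonneg _), rpow_two, sq_abs]
  exact rpow_le_rpow_of_nonpos hl2 (by linarith) (by linarith)

namespace FC

def wienerNorm (t : ℝ) (c : FC) : ℝ := ∑' l : ℤ, (1 + (l : ℝ) ^ 2) ^ (t / 2) * ‖c l‖

theorem wt_mul_norm_sq (t : ℝ) (c : FC) (k : ℤ) :
    wt t k * ‖c k‖ ^ 2 = ((1 + (k : ℝ) ^ 2) ^ (t / 2) * ‖c k‖) ^ 2 := by
  rw [mul_pow, ← rpow_mul_natCast (by positivity), wt]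
  norm_num

theorem memHs_iff {t : ℝ} {c : FC} :
    memHs t c ↔ Summable fun k : ℤ => ((1 + (k : ℝ) ^ 2) ^ (t / 2) * ‖c k‖) ^ 2 := by
  simp only [memHs, wt_mul_norm_sq]

theorem hsNorm_sq (t : ℝ) (c : FC) :
    hsNorm t c ^ 2 = ∑' k : ℤ, ((1 + (k : ℝ) ^ 2) ^ (t / 2) * ‖c k‖) ^ 2 := by
  simp only [hsNorm, wt_mul_norm_sq]
  exact sq_sqrt (tsum_nonneg fun k => sq_nonneg _)

theorem rpow_mul_norm_le_hsNorm {t : ℝ} {c : FC} (hc : memHs t c) (k : ℤ) :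
    (1 + (k : ℝ) ^ 2) ^ (t / 2) * ‖c k‖ ≤ hsNorm t c := by
  refine le_sqrt_of_sq_le ?_
  rw [← wt_mul_norm_sq]
  exact hc.le_tsum k fun j _ => by rw [wt_mul_norm_sq]; positivity

theorem norm_le_rpow_mul_norm {t : ℝ} (ht : 0 ≤ t) (c : FC) (k : ℤ) :
    ‖c k‖ ≤ (1 + (k : ℝ) ^ 2) ^ (t / 2) * ‖c k‖ :=
  le_mul_of_one_le_left (norm_nonneg _) (one_le_rpow (by nlinarith) (by linarith))

theorem norm_D1_le_rpow_mul_norm {t : ℝ} (ht : 1 ≤ t) (c : FC) (k : ℤ) :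
    ‖D1 c k‖ ≤ (1 + (k : ℝ) ^ 2) ^ (t / 2) * ‖c k‖ := by
  rw [D1, norm_mul, norm_mul, Complex.norm_I, one_mul, Complex.norm_intCast]
  exact mul_le_mul_of_nonneg_right (abs_le_one_add_sq_rpow ht _) (norm_nonneg _)

theorem summable_and_wienerNorm_le {s t : ℝ} {c : FC} (hc : memHs s c) (hts : t + 1 / 2 < s) :
    Summable (fun l : ℤ => (1 + (l : ℝ) ^ 2) ^ (t / 2) * ‖c l‖) ∧
      wienerNorm t c ≤ √(∑' l : ℤ, (1 + (l : ℝ) ^ 2) ^ (t - s)) * hsNorm s c := by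
  have hsq (l : ℤ) : ((1 + (l : ℝ) ^ 2) ^ ((t - s) / 2)) ^ 2 = (1 + (l : ℝ) ^ 2) ^ (t - s) := by
    rw [← rpow_natCast, ← rpow_mul (by positivity)]; norm_num
  have hsplit (l : ℤ) : (1 + (l : ℝ) ^ 2) ^ ((t - s) / 2) * ((1 + (l : ℝ) ^ 2) ^ (s / 2) * ‖c l‖)
      = (1 + (l : ℝ) ^ 2) ^ (t / 2) * ‖c l‖ := by
    rw [← mul_assoc, ← rpow_add (by positivity)]; ring_nf
  have hcs := summable_mul_and_tsum_mul_le_sqrt (fun l => by positivity) (fun l => by positivity)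
    ((summable_one_add_sq_rpow (by linarith)).congr fun l => (hsq l).symm) (memHs_iff.1 hc)
  simpa only [wienerNorm, hsplit, hsq, ← hsNorm_sq,
    sqrt_sq (show 0 ≤ hsNorm s c from sqrt_nonneg _)] using hcs

theorem lie_apply {ξ v : FC} {k : ℤ} (h₁ : Summable fun j => ξ j * D1 v (k - j))
    (h₂ : Summable fun j => D1 ξ j * v (k - j)) : lie ξ v k = D1 (mul ξ v) k := by
  rw [lie, Pi.add_apply, mul, mul, ← h₁.tsum_add h₂]
  show _ = Complex.I * k * ∑' j, ξ j * v (k - j)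
  rw [← tsum_mul_left]
  refine tsum_congr fun j => ?_
  simp only [D1]
  push_cast
  ring

def imKernel (ξ v : FC) (k m : ℤ) : ℝ := (ξ (k - m) * v m * starRingEnd ℂ (v k)).im

theorem imKernel_antisymm {ξ : FC} (hξ : isReal ξ) (v : FC) (k m : ℤ) :
    imKernel ξ v m k = -imKernel ξ v k m := by
  rw [imKernel, imKernel, ← neg_sub k m, hξ, ← Complex.conj_im]
  simp only [map_mul, Complex.conj_conj]
  ring_nf

theorem abs_imKernel_le (ξ v : FC) (k m : ℤ) :
    |imKernel ξ v k m| ≤ ‖ξ (k - m)‖ * (‖v k‖ * ‖v m‖) := by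
  refine (Complex.abs_im_le_norm _).trans_eq ?_
  rw [norm_mul, norm_mul, Complex.norm_conj]
  ring

theorem re_wt_mul_lie_mul_conj (σ : ℝ) {ξ v : FC} {B : ℝ} (hξ : Summable fun j => ‖ξ j‖)
    (hDξ : Summable fun j => ‖D1 ξ j‖) (hv : ∀ k, ‖v k‖ ≤ B) (hDv : ∀ k, ‖D1 v k‖ ≤ B)
    (k : ℤ) :
    ((wt σ k : ℂ) * (lie ξ v k * starRingEnd ℂ (v k))).re =
      -((k : ℝ) * wt σ k) * ∑' m, imKernel ξ v k m := by
  have hbdd {a b : FC} (ha : Summable fun j => ‖a j‖) (hb : ∀ k, ‖b k‖ ≤ B) :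
      Summable fun j => a j * b (k - j) :=
    .of_norm <| (ha.mul_right B).of_nonneg_of_le (fun _ => norm_nonneg _) fun j => by
      rw [norm_mul]; exact mul_le_mul_of_nonneg_left (hb _) (norm_nonneg _)
  have hreindex : mul ξ v k * starRingEnd ℂ (v k) =
      ∑' m, ξ (k - m) * v m * starRingEnd ℂ (v k) := by
    rw [mul, ← (Equiv.subLeft k).tsum_eq, ← tsum_mul_right]
    simp
  have him : (mul ξ v k * starRingEnd ℂ (v k)).im = ∑' m, imKernel ξ v k m := by
    rw [hreindex, Complex.im_tsum]
    · rfl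
    · rw [← (Equiv.subLeft k).summable_iff]
      simpa [Function.comp_def] using (hbdd hξ hv).mul_right (starRingEnd ℂ (v k))
  rw [lie_apply (hbdd hξ hDv) (hbdd hDξ hv), D1, ← him,
    show (wt σ k : ℂ) * (Complex.I * k * mul ξ v k * starRingEnd ℂ (v k)) =
      ((k * wt σ k : ℝ) : ℂ) * (Complex.I * (mul ξ v k * starRingEnd ℂ (v k))) by push_cast; ring,
    Complex.re_ofReal_mul, Complex.I_mul_re]
  ring

theorem abs_tsum_cutoff_mul_le {σ M : ℝ} (hσ : 1 ≤ σ) (hM : 0 < M) {ξ v : FC} (hξr : isReal ξ)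
    (hξ : Summable fun l : ℤ => (1 + (l : ℝ) ^ 2) ^ ((σ + 1) / 2) * ‖ξ l‖) (hv : memHs σ v) :
    |∑' k : ℤ, cutoff M k * (k * wt σ k) * ∑' m, imKernel ξ v k m| ≤
      2 ^ (σ / 2) * (2 * σ + 3) * wienerNorm (σ + 1) ξ * hsNorm σ v ^ 2 / 2 := by
  set C := 2 ^ (σ / 2) * (2 * σ + 3)
  have hsupp : HasFiniteSupport fun k : ℤ => cutoff M k * (k * wt σ k) := by
    refine (Set.finite_Icc (-⌈2 * M⌉) ⌈2 * M⌉).subset fun k hk => ?_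
    have hk : |(k : ℝ)| < 2 * M := by
      by_contra! h
      exact hk (by simp [cutoff_eq_zero hM h])
    have : |k| ≤ ⌈2 * M⌉ := by exact_mod_cast hk.le.trans (Int.le_ceil _)
    exact abs_le.1 this
  have hrow (k : ℤ) : Summable fun m => |imKernel ξ v k m| := by
    have hξ1 : Summable fun l => ‖ξ l‖ :=
      hξ.of_nonneg_of_le (fun _ => norm_nonneg _) (norm_le_rpow_mul_norm (by linarith) ξ)
    refine (((Equiv.subLeft k).summable_iff.2 hξ1).mul_right (‖v k‖ * hsNorm σ v)).of_nonneg_of_le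
      (fun _ => abs_nonneg _) fun m => (abs_imKernel_le ξ v k m).trans ?_
    have := (norm_le_rpow_mul_norm (by linarith) v m).trans (rpow_mul_norm_le_hsNorm hv m)
    simp only [Function.comp_apply, Equiv.subLeft_apply]
    gcongr
  have hmaj (k m : ℤ) : |(cutoff M k * (k * wt σ k) - cutoff M m * (m * wt σ m)) *
      imKernel ξ v k m| ≤ C * ((1 + ((k - m : ℤ) : ℝ) ^ 2) ^ ((σ + 1) / 2) * ‖ξ (k - m)‖) *
        ((1 + (k : ℝ) ^ 2) ^ (σ / 2) * ‖v k‖ * ((1 + (m : ℝ) ^ 2) ^ (σ / 2) * ‖v m‖)) := by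
    rw [abs_mul]
    refine (mul_le_mul (abs_cutoff_mul_sub_le hσ hM k m) (abs_imKernel_le ξ v k m)
      (abs_nonneg _) (by positivity)).trans_eq ?_
    push_cast
    ring
  refine (abs_tsum_mul_tsum_le_of_antisymm hsupp hrow (imKernel_antisymm hξr v)
    (fun l => by positivity) (hξ.mul_left C) (memHs_iff.1 hv) hmaj).trans_eq ?_
  rw [tsum_mul_left, hsNorm_sq, wienerNorm]

theorem abs_hsInner_lie_le {σ : ℝ} (hσ : 1 ≤ σ) {ξ v : FC} (hξr : isReal ξ)
    (hξ : Summable fun l : ℤ => (1 + (l : ℝ) ^ 2) ^ ((σ + 1) / 2) * ‖ξ l‖) (hv : memHs σ v) :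
    |hsInner σ (lie ξ v) v| ≤
      2 ^ (σ / 2) * (2 * σ + 3) * wienerNorm (σ + 1) ξ * hsNorm σ v ^ 2 / 2 := by
  have hre := re_wt_mul_lie_mul_conj σ (B := hsNorm σ v)
    (hξ.of_nonneg_of_le (fun _ => norm_nonneg _) (norm_le_rpow_mul_norm (by linarith) ξ))
    (hξ.of_nonneg_of_le (fun _ => norm_nonneg _) (norm_D1_le_rpow_mul_norm (by linarith) ξ))
    (fun k => (norm_le_rpow_mul_norm (by linarith) v k).trans (rpow_mul_norm_le_hsNorm hv k))
    (fun k => (norm_D1_le_rpow_mul_norm hσ v k).trans (rpow_mul_norm_le_hsNorm hv k))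
  have hξ0 : 0 ≤ wienerNorm (σ + 1) ξ := tsum_nonneg fun l => by positivity
  refine abs_re_tsum_le_of_cutoff (θ := fun N (k : ℤ) => cutoff (N + 1) k) (by positivity)
    (fun N k => ?_) (fun k => ?_) (fun N => ?_)
  · rw [abs_of_nonneg (cutoff_nonneg _ _)]; exact cutoff_le_one _ _
  · refine tendsto_const_nhds.congr' <| eventually_atTop.2 ⟨k.natAbs, fun N hN => ?_⟩
    refine (cutoff_eq_one (by positivity) ?_).symm
    rw [← Int.cast_abs, Int.abs_eq_natAbs]
    exact_mod_cast hN.trans (Nat.le_succ N)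
  · have hterm (k : ℤ) : cutoff (N + 1) k * ((wt σ k : ℂ) * (lie ξ v k * starRingEnd ℂ (v k))).re
        = -(cutoff (N + 1) k * (k * wt σ k) * ∑' m, imKernel ξ v k m) := by
      rw [hre]; ring
    simp only [hterm, tsum_neg, abs_neg]
    exact abs_tsum_cutoff_mul_le hσ (by positivity) hξr hξ hv

theorem exists_abs_hsInner_lie_le {σ s : ℝ} (hσ : 1 ≤ σ) (hs : σ + 3 / 2 < s) :
    ∃ C > 0, ∀ ξ v : FC, memHs s ξ → memHs σ v → isReal ξ →
      |hsInner σ (lie ξ v) v| ≤ C * hsNorm s ξ * hsNorm σ v ^ 2 := by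
  set c₀ := ∑' l : ℤ, (1 + (l : ℝ) ^ 2) ^ (σ + 1 - s)
  have hc₀ : 0 < c₀ := (summable_one_add_sq_rpow (by linarith)).tsum_pos
    (fun _ => by positivity) 0 (by positivity)
  refine ⟨2 ^ (σ / 2) * (2 * σ + 3) / 2 * √c₀, by positivity, fun ξ v hξ hv hξr => ?_⟩
  obtain ⟨hξsum, hξle⟩ := summable_and_wienerNorm_le hξ (t := σ + 1) (by linarith)
  calc |hsInner σ (lie ξ v) v|
      ≤ 2 ^ (σ / 2) * (2 * σ + 3) * wienerNorm (σ + 1) ξ * hsNorm σ v ^ 2 / 2 :=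
        abs_hsInner_lie_le hσ hξr hξsum hv
    _ ≤ 2 ^ (σ / 2) * (2 * σ + 3) * (√c₀ * hsNorm s ξ) * hsNorm σ v ^ 2 / 2 := by gcongr
    _ = 2 ^ (σ / 2) * (2 * σ + 3) / 2 * √c₀ * hsNorm s ξ * hsNorm σ v ^ 2 := by ring

end FC

/-- Let `s > 7/2`.  There is `C = C(s) > 0` such that for all `ξ ∈ H^s(𝕋)`
and `v ∈ H^{s-2}(𝕋)`: `|(D^{s-2} 𝓛_ξ v, D^{s-2} v)_{L²}| ≤ C ‖ξ‖_{H^s} ‖v‖²_{H^{s-2}}`.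
(Note `(D^{s-2}a, D^{s-2}b)_{L²}` is the `H^{s-2}` inner product.) -/
theorem statement8 (s : ℝ) (hs : 7 / 2 < s) :
    ∃ C > (0 : ℝ), ∀ ξ v : FC,
      FC.memHs s ξ → FC.memHs (s - 2) v → FC.isReal ξ → FC.isReal v →
      |FC.hsInner (s - 2) (FC.lie ξ v) v| ≤ C * FC.hsNorm s ξ * FC.hsNorm (s - 2) v ^ 2 := by
  obtain ⟨C, hC, hbound⟩ := FC.exists_abs_hsInner_lie_le (σ := s - 2) (s := s)
    (by linarith) (by linarith)
  exact ⟨C, hC, fun ξ v hξ hv hξr _ => hbound ξ v hξ hv hξr⟩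
end
end
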